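/- Let (ε₁, ε₂) be bivariate standard normal with correlation ρ ∈ (-1,1), and suppose P(ε₁ ≤ 0, ε₂ ≤ c) is known for some known c ≤ 0. Then ρ is uniquely determined, since ρ ↦ P(ε₁ ≤ 0, ε₂ ≤ c) = ∫_{-∞}^{c} φ(η) Φ(-(ρ/√(1-ρ²))η) dη is strictly increasing on (-1,1). -/
import Mathlib

open MeasureTheory

/-- The standard normal density. -/
noncomputable def phi (x : ℝ) : ℝ := Real.exp (-x ^ 2 / 2) / Real.sqrt (2 * Real.pi)

/-- The standard normal cumulative distribution function. -/
noncomputable def Phi (x : ℝ) : ℝ := ∫ t in Set.Iic x, phi t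

/-- `P(ε₁ ≤ 0, ε₂ ≤ c)` for a bivariate standard normal pair with correlation `ρ`,
written via the conditional decomposition. -/
noncomputable def jointProb (c ρ : ℝ) : ℝ :=
  ∫ η in Set.Iic c, phi η * Phi (-(ρ / Real.sqrt (1 - ρ ^ 2)) * η)

lemma phi_pos (x : ℝ) : 0 < phi x := by
  have : 0 < Real.sqrt (2 * Real.pi) := Real.sqrt_pos.2 (by positivity)
  exact div_pos (Real.exp_pos _) this

lemma phi_integrable : Integrable phi := by
  have h : Integrable (fun x : ℝ => Real.exp (-(1/2) * x ^ 2)) :=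
    integrable_exp_neg_mul_sq (by norm_num)
  have := h.div_const (Real.sqrt (2 * Real.pi))
  convert this using 2 with x
  unfold phi; ring_nf

lemma Phi_strictMono : StrictMono Phi := by
  intro a b hab
  have ha : IntegrableOn phi (Set.Iic a) := phi_integrable.integrableOn
  have hb : IntegrableOn phi (Set.Iic b) := phi_integrable.integrableOn
  have h := intervalIntegral.integral_Iic_sub_Iic (μ := volume) (f := phi) ha hb
  have hpos : 0 < ∫ x in a..b, phi x := by
    apply intervalIntegral.intervalIntegral_pos_of_pos_on
    · exact phi_integrable.intervalIntegrable
    · exact fun x _ => phi_pos x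
    · exact hab
  have : Phi b - Phi a = ∫ x in a..b, phi x := h
  linarith

lemma Phi_nonneg (x : ℝ) : 0 ≤ Phi x :=
  setIntegral_nonneg measurableSet_Iic (fun t _ => (phi_pos t).le)

lemma Phi_le (x : ℝ) : Phi x ≤ ∫ t, phi t := by
  apply setIntegral_le_integral phi_integrable
  filter_upwards with t using (phi_pos t).le

lemma Phi_measurable : Measurable Phi := Phi_strictMono.monotone.measurable

lemma integrableOn_aux (k c : ℝ) :
    IntegrableOn (fun η => phi η * Phi (k * η)) (Set.Iic c) := by
  have hmeas : AEStronglyMeasurable (fun η => phi η * Phi (k * η))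
      (volume.restrict (Set.Iic c)) := by
    apply AEStronglyMeasurable.mul
    · exact (Measurable.aestronglyMeasurable (by unfold phi; fun_prop))
    · exact ((Phi_measurable.comp (measurable_const.mul measurable_id)).aestronglyMeasurable)
  refine Integrable.mono' ((phi_integrable.const_mul (∫ t, phi t)).integrableOn) hmeas ?_
  filter_upwards with η
  rw [Real.norm_eq_abs, abs_of_nonneg (mul_nonneg (phi_pos η).le (Phi_nonneg _))]
  calc phi η * Phi (k * η) ≤ phi η * ∫ t, phi t :=
        mul_le_mul_of_nonneg_left (Phi_le _) (phi_pos η).le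
    _ = (∫ t, phi t) * phi η := mul_comm _ _

lemma k_strictMono : StrictMonoOn (fun ρ : ℝ => ρ / Real.sqrt (1 - ρ ^ 2))
    (Set.Ioo (-1 : ℝ) 1) := by
  intro a ha b hb hab
  have ha2 : (0:ℝ) < 1 - a ^ 2 := by nlinarith [ha.1, ha.2]
  have hb2 : (0:ℝ) < 1 - b ^ 2 := by nlinarith [hb.1, hb.2]
  have hsa : 0 < Real.sqrt (1 - a ^ 2) := Real.sqrt_pos.2 ha2
  have hsb : 0 < Real.sqrt (1 - b ^ 2) := Real.sqrt_pos.2 hb2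
  have hsa2 : Real.sqrt (1 - a ^ 2) ^ 2 = 1 - a ^ 2 := Real.sq_sqrt ha2.le
  have hsb2 : Real.sqrt (1 - b ^ 2) ^ 2 = 1 - b ^ 2 := Real.sq_sqrt hb2.le
  rw [div_lt_div_iff₀ hsa hsb]
  set sa := Real.sqrt (1 - a ^ 2)
  set sb := Real.sqrt (1 - b ^ 2)
  rcases le_or_gt 0 a with h0a | h0a
  · -- 0 ≤ a < b, so sb < sa
    have : sb < sa := by
      have : sb ^ 2 < sa ^ 2 := by nlinarith
      nlinarith
    nlinarith
  · rcases le_or_gt b 0 with hb0 | hb0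
    · have : sa < sb := by
        have : sa ^ 2 < sb ^ 2 := by nlinarith
        nlinarith
      nlinarith
    · nlinarith [mul_pos hb0 hsa, mul_pos (neg_pos.2 h0a) hsb]

/-- Theorem 6(a): for known `c ≤ 0`, the map `ρ ↦ P(ε₁ ≤ 0, ε₂ ≤ c)` is strictly
increasing on `(-1,1)`; hence knowledge of this probability uniquely determines `ρ`. -/
theorem stmt_19 (c : ℝ) (hc : c ≤ 0) :
    StrictMonoOn (jointProb c) (Set.Ioo (-1 : ℝ) 1) ∧
    (∀ ρ ∈ Set.Ioo (-1 : ℝ) 1, ∀ ρ' ∈ Set.Ioo (-1 : ℝ) 1,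
      jointProb c ρ = jointProb c ρ' → ρ = ρ') := by
  have hmain : StrictMonoOn (jointProb c) (Set.Ioo (-1 : ℝ) 1) := by
    intro ρ hρ ρ' hρ' hlt
    set k := ρ / Real.sqrt (1 - ρ ^ 2) with hk
    set k' := ρ' / Real.sqrt (1 - ρ' ^ 2) with hk'
    have hkk : k < k' := k_strictMono hρ hρ' hlt
    have hf : IntegrableOn (fun η => phi η * Phi (-k * η)) (Set.Iic c) :=
      integrableOn_aux (-k) c
    have hg : IntegrableOn (fun η => phi η * Phi (-k' * η)) (Set.Iic c) :=
      integrableOn_aux (-k') c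
    have hnonneg : ∀ η ∈ Set.Iic c,
        0 ≤ phi η * Phi (-k' * η) - phi η * Phi (-k * η) := by
      intro η hη
      have hη0 : η ≤ 0 := le_trans hη hc
      have harg : -k * η ≤ -k' * η := by nlinarith
      have := Phi_strictMono.monotone harg
      nlinarith [phi_pos η]
    have hdiffpos : 0 < ∫ η in Set.Iic c,
        (phi η * Phi (-k' * η) - phi η * Phi (-k * η)) := by
      rw [setIntegral_pos_iff_support_of_nonneg_ae]
      · -- measure of support ∩ Iic c is positive
        have hsub : Set.Iio c ⊆
            Function.support (fun η => phi η * Phi (-k' * η) - phi η * Phi (-k * η))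
              ∩ Set.Iic c := by
          intro η hη
          have hη0 : η < 0 := lt_of_lt_of_le hη hc
          have harg : -k * η < -k' * η := by nlinarith
          have := Phi_strictMono harg
          constructor
          · simp only [Function.mem_support]
            have := phi_pos η
            intro hcontra
            nlinarith
          · exact (Set.mem_Iio.mp hη).le
        have h1 : (0 : ENNReal) < volume (Set.Iio c) := by simp [Real.volume_Iio]
        exact lt_of_lt_of_le h1 (measure_mono hsub)
      · rw [Filter.EventuallyLE, ae_restrict_iff' measurableSet_Iic]
        filter_upwards with η hη using hnonneg η hη
      · exact hg.sub hf
    have heq : (∫ η in Set.Iic c, (phi η * Phi (-k' * η) - phi η * Phi (-k * η))) =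
        (∫ η in Set.Iic c, phi η * Phi (-k' * η)) - ∫ η in Set.Iic c, phi η * Phi (-k * η) :=
      integral_sub hg hf
    unfold jointProb
    rw [← hk, ← hk']
    linarith
  refine ⟨hmain, fun ρ hρ ρ' hρ' heq => hmain.injOn hρ hρ' heq⟩
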